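/- arXiv:1611.05903 — 2 statements merged into one kernel-verified Lean document; each statement's English description precedes it below -/
import Mathlib

section
/- Let q be a symmetric positive definite n×n real matrix, κ ∈ ℝⁿ, β ∈ ℝⁿ, and let μ be a probability measure on Y = ℝ^d. Suppose α₁, α₂ : Y → ℝ^{n×m} satisfy ∫_Y (α₁(y)α₁(y)ᵀ + α₂(y)α₂(y)ᵀ) dμ(y) = q. Then over all measurable v = (v₁, v₂) : Y → ℝ^m × ℝ^m with ∫|v|² dμ < ∞ satisfying the constraint β = κ + ∫_Y (α₁(y)v₁(y) + α₂(y)v₂(y)) dμ(y), the infimum of (1/2)∫_Y |v(y)|² dμ(y) equals (1/2)(β − κ)ᵀ q⁻¹ (β − κ), and it is attained by v₁(y) = α₁(y)ᵀ q⁻¹(β − κ), v₂(y) = α₂(y)ᵀ q⁻¹(β − κ). -/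
/-!
Complete the square. Put `α = [α₁ α₂]`, `v = (v₁, v₂)`, `w = q⁻¹ (β - κ)` and `u = αᵀ w`. Pointwise
`|v|² ≥ 2 ⟪u, v⟫ - |u|² = 2 ⟪w, α v⟫ - |u|²`, with equality at `v = u`. Integrating, the constraint
turns `∫ ⟪w, α v⟫` into `⟪w, β - κ⟫`, and the Gram identity `∫ α αᵀ = q` turns `∫ |u|²` into
`⟪w, q w⟫ = ⟪w, β - κ⟫`. Hence `∫ |v|² ≥ ⟪β - κ, q⁻¹ (β - κ)⟫`, and `u` meets the constraint with
equality.
-/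

open MeasureTheory Matrix

section DotProduct

variable {ι : Type*} [Fintype ι]

theorem two_mul_dotProduct_le (u v : ι → ℝ) : 2 * (u ⬝ᵥ v) ≤ u ⬝ᵥ u + v ⬝ᵥ v := by
  have h : 0 ≤ (u - v) ⬝ᵥ (u - v) := Finset.sum_nonneg fun i _ => mul_self_nonneg _
  simp only [sub_dotProduct, dotProduct_sub, dotProduct_comm v u] at h
  linarith

theorem abs_dotProduct_le (u v : ι → ℝ) : |u ⬝ᵥ v| ≤ (u ⬝ᵥ u + v ⬝ᵥ v) / 2 := by
  have h := two_mul_dotProduct_le (-u) v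
  simp only [neg_dotProduct, dotProduct_neg, neg_neg] at h
  rw [abs_le]
  constructor <;> linarith [two_mul_dotProduct_le u v]

theorem sumElim_dotProduct_self {ι₂ : Type*} [Fintype ι₂] (a : ι → ℝ)
    (b : ι₂ → ℝ) : Sum.elim a b ⬝ᵥ Sum.elim a b = ∑ j, a j ^ 2 + ∑ j, b j ^ 2 := by
  rw [sumElim_dotProduct_sumElim]
  simp only [dotProduct, sq]

variable {n : Type*} [Fintype n]

theorem transpose_mulVec_dotProduct (A : Matrix n ι ℝ) (w : n → ℝ) (v : ι → ℝ) :
    (Aᵀ *ᵥ w) ⬝ᵥ v = w ⬝ᵥ (A *ᵥ v) := by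
  rw [mulVec_transpose, dotProduct_mulVec]

theorem mulVec_transpose_mulVec_apply (A : Matrix n ι ℝ) (w : n → ℝ) (i : n) :
    (A *ᵥ (Aᵀ *ᵥ w)) i = w ⬝ᵥ fun j => A i ⬝ᵥ A j := by
  rw [mulVec_mulVec, dotProduct_comm]
  rfl

end DotProduct

section Integral

variable {Y ι : Type*} [MeasurableSpace Y] {μ : Measure Y} [Fintype ι]

theorem integrable_dotProduct {f g : Y → ι → ℝ} (hf : Measurable f) (hg : Measurable g)
    (hff : Integrable (fun y => f y ⬝ᵥ f y) μ) (hgg : Integrable (fun y => g y ⬝ᵥ g y) μ) :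
    Integrable (fun y => f y ⬝ᵥ g y) μ := by
  refine Integrable.mono' ((hff.add hgg).div_const 2) ?_
    (ae_of_all _ fun y => abs_dotProduct_le (f y) (g y))
  fun_prop

theorem integrable_const_dotProduct (w : ι → ℝ) {f : Y → ι → ℝ}
    (hf : ∀ i, Integrable (fun y => f y i) μ) : Integrable (fun y => w ⬝ᵥ f y) μ :=
  integrable_finsetSum _ fun i _ => (hf i).const_mul (w i)

theorem integral_const_dotProduct (w : ι → ℝ) {f : Y → ι → ℝ}
    (hf : ∀ i, Integrable (fun y => f y i) μ) :
    ∫ y, w ⬝ᵥ f y ∂μ = w ⬝ᵥ fun i => ∫ y, f y i ∂μ := by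
  simp only [dotProduct]
  rw [integral_finsetSum _ fun i _ => (hf i).const_mul (w i)]
  simp only [integral_const_mul]

end Integral

section GramMatrix

variable {Y n ι : Type*} [MeasurableSpace Y] {μ : Measure Y} {α : Y → Matrix n ι ℝ}
  {q : Matrix n n ℝ}

theorem measurable_transpose_mulVec [Fintype n] (hα : ∀ i k, Measurable fun y => α y i k)
    (w : n → ℝ) : Measurable fun y => (α y)ᵀ *ᵥ w := by
  refine measurable_pi_lambda _ fun k => ?_
  simp only [mulVec, dotProduct, transpose_apply]
  fun_prop

variable [Fintype ι]

theorem integrable_row_dotProduct_row (hα : ∀ i k, Measurable fun y => α y i k)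
    (hq : q.PosDef) (hgram : ∀ i j, q i j = ∫ y, α y i ⬝ᵥ α y j ∂μ) (i j : n) :
    Integrable (fun y => α y i ⬝ᵥ α y j) μ := by
  -- a non-integrable diagonal entry would have Bochner integral `0`, contradicting `q i i > 0`
  have hrow : ∀ i, Measurable fun y => α y i := fun i => measurable_pi_lambda _ (hα i)
  have hdiag : ∀ i, Integrable (fun y => α y i ⬝ᵥ α y i) μ := fun i => by
    by_contra h
    have := hgram i i
    rw [integral_undef h] at this
    exact hq.diag_pos.ne' this
  exact integrable_dotProduct (hrow i) (hrow j) (hdiag i) (hdiag j)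

variable [Fintype n]

theorem integrable_mulVec_transpose_mulVec_apply
    (hint : ∀ i j, Integrable (fun y => α y i ⬝ᵥ α y j) μ) (w : n → ℝ) (i : n) :
    Integrable (fun y => (α y *ᵥ ((α y)ᵀ *ᵥ w)) i) μ := by
  simp only [mulVec_transpose_mulVec_apply]
  exact integrable_const_dotProduct w (hint i)

theorem integral_mulVec_transpose_mulVec_apply
    (hint : ∀ i j, Integrable (fun y => α y i ⬝ᵥ α y j) μ)
    (hgram : ∀ i j, q i j = ∫ y, α y i ⬝ᵥ α y j ∂μ) (w : n → ℝ) (i : n) :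
    ∫ y, (α y *ᵥ ((α y)ᵀ *ᵥ w)) i ∂μ = (q *ᵥ w) i := by
  simp only [mulVec_transpose_mulVec_apply]
  rw [integral_const_dotProduct w (hint i), dotProduct_comm]
  simp only [← hgram]
  rfl

theorem integrable_transpose_mulVec_dotProduct_self
    (hint : ∀ i j, Integrable (fun y => α y i ⬝ᵥ α y j) μ) (w : n → ℝ) :
    Integrable (fun y => ((α y)ᵀ *ᵥ w) ⬝ᵥ ((α y)ᵀ *ᵥ w)) μ := by
  simp only [transpose_mulVec_dotProduct]
  exact integrable_const_dotProduct w (integrable_mulVec_transpose_mulVec_apply hint w)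

theorem integral_transpose_mulVec_dotProduct_self
    (hint : ∀ i j, Integrable (fun y => α y i ⬝ᵥ α y j) μ)
    (hgram : ∀ i j, q i j = ∫ y, α y i ⬝ᵥ α y j ∂μ) (w : n → ℝ) :
    ∫ y, ((α y)ᵀ *ᵥ w) ⬝ᵥ ((α y)ᵀ *ᵥ w) ∂μ = w ⬝ᵥ (q *ᵥ w) := by
  simp only [transpose_mulVec_dotProduct]
  rw [integral_const_dotProduct w (integrable_mulVec_transpose_mulVec_apply hint w)]
  simp only [integral_mulVec_transpose_mulVec_apply hint hgram]

theorem two_mul_dotProduct_sub_le_integral_dotProduct_self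
    (hα : ∀ i k, Measurable fun y => α y i k)
    (hint : ∀ i j, Integrable (fun y => α y i ⬝ᵥ α y j) μ)
    (hgram : ∀ i j, q i j = ∫ y, α y i ⬝ᵥ α y j ∂μ) {v : Y → ι → ℝ} (hv : Measurable v)
    (hvv : Integrable (fun y => v y ⬝ᵥ v y) μ) {b : n → ℝ}
    (hb : ∀ i, ∫ y, (α y *ᵥ v y) i ∂μ = b i) (w : n → ℝ) :
    2 * (w ⬝ᵥ b) - w ⬝ᵥ (q *ᵥ w) ≤ ∫ y, v y ⬝ᵥ v y ∂μ := by
  have hαv : ∀ i, Integrable (fun y => (α y *ᵥ v y) i) μ := fun i =>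
    integrable_dotProduct (measurable_pi_lambda _ (hα i)) hv (hint i i) hvv
  have hwαv : ∫ y, w ⬝ᵥ (α y *ᵥ v y) ∂μ = w ⬝ᵥ b := by
    rw [integral_const_dotProduct w hαv]
    simp only [hb]
  have hu := integrable_transpose_mulVec_dotProduct_self hint w
  calc 2 * (w ⬝ᵥ b) - w ⬝ᵥ (q *ᵥ w)
      = ∫ y, 2 * (w ⬝ᵥ (α y *ᵥ v y)) - ((α y)ᵀ *ᵥ w) ⬝ᵥ ((α y)ᵀ *ᵥ w) ∂μ := by
        rw [integral_sub ((integrable_const_dotProduct w hαv).const_mul 2) hu,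
          integral_const_mul, hwαv, integral_transpose_mulVec_dotProduct_self hint hgram]
    _ ≤ ∫ y, v y ⬝ᵥ v y ∂μ := by
        refine integral_mono (((integrable_const_dotProduct w hαv).const_mul 2).sub hu) hvv
          fun y => ?_
        have := two_mul_dotProduct_le ((α y)ᵀ *ᵥ w) (v y)
        rw [transpose_mulVec_dotProduct] at this
        dsimp only
        linarith

theorem dotProduct_nonsing_inv_mulVec_le_integral_dotProduct_self [DecidableEq n]
    (hα : ∀ i k, Measurable fun y => α y i k)
    (hint : ∀ i j, Integrable (fun y => α y i ⬝ᵥ α y j) μ)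
    (hgram : ∀ i j, q i j = ∫ y, α y i ⬝ᵥ α y j ∂μ) (hq : IsUnit q.det) {v : Y → ι → ℝ}
    (hv : Measurable v) (hvv : Integrable (fun y => v y ⬝ᵥ v y) μ) {b : n → ℝ}
    (hb : ∀ i, ∫ y, (α y *ᵥ v y) i ∂μ = b i) :
    b ⬝ᵥ (q⁻¹ *ᵥ b) ≤ ∫ y, v y ⬝ᵥ v y ∂μ := by
  have := two_mul_dotProduct_sub_le_integral_dotProduct_self hα hint hgram hv hvv hb (q⁻¹ *ᵥ b)
  rwa [mulVec_mulVec, mul_nonsing_inv _ hq, one_mulVec, dotProduct_comm, two_mul,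
    add_sub_cancel_right] at this

end GramMatrix

theorem Measurable.sumElim_pi {Y ι₁ ι₂ : Type*} [MeasurableSpace Y] {f : Y → ι₁ → ℝ}
    {g : Y → ι₂ → ℝ} (hf : Measurable f) (hg : Measurable g) :
    Measurable fun y => Sum.elim (f y) (g y) := by
  refine measurable_pi_lambda _ fun k => ?_
  rcases k with k | k
  exacts [measurable_pi_iff.1 hf k, measurable_pi_iff.1 hg k]

theorem stmt1_general {n m d : ℕ}
    (q : Matrix (Fin n) (Fin n) ℝ) (hq : q.PosDef)
    (κ β : Fin n → ℝ)
    (μ : Measure (Fin d → ℝ))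
    (α₁ α₂ : (Fin d → ℝ) → Matrix (Fin n) (Fin m) ℝ)
    (hα₁ : ∀ i k, Measurable (fun y => α₁ y i k)) (hα₂ : ∀ i k, Measurable (fun y => α₂ y i k))
    (hq' : ∀ i j, q i j =
      ∫ y, (∑ k, α₁ y i k * α₁ y j k + ∑ k, α₂ y i k * α₂ y j k) ∂μ) :
    (∀ v₁ v₂ : (Fin d → ℝ) → (Fin m → ℝ), Measurable v₁ → Measurable v₂ →
      Integrable (fun y => ∑ j, (v₁ y j)^2 + ∑ j, (v₂ y j)^2) μ →
      (∀ i, β i = κ i + ∫ y, ((α₁ y *ᵥ v₁ y) i + (α₂ y *ᵥ v₂ y) i) ∂μ) →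
      (1/2) * ((β - κ) ⬝ᵥ (q⁻¹ *ᵥ (β - κ)))
        ≤ (1/2) * ∫ y, (∑ j, (v₁ y j)^2 + ∑ j, (v₂ y j)^2) ∂μ) ∧
    ((∀ j, Measurable (fun y => ((α₁ y)ᵀ *ᵥ (q⁻¹ *ᵥ (β - κ))) j)) ∧
     (∀ j, Measurable (fun y => ((α₂ y)ᵀ *ᵥ (q⁻¹ *ᵥ (β - κ))) j)) ∧
     Integrable (fun y => ∑ j, (((α₁ y)ᵀ *ᵥ (q⁻¹ *ᵥ (β - κ))) j)^2
        + ∑ j, (((α₂ y)ᵀ *ᵥ (q⁻¹ *ᵥ (β - κ))) j)^2) μ ∧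
     (∀ i, β i = κ i + ∫ y, ((α₁ y *ᵥ ((α₁ y)ᵀ *ᵥ (q⁻¹ *ᵥ (β - κ)))) i
        + (α₂ y *ᵥ ((α₂ y)ᵀ *ᵥ (q⁻¹ *ᵥ (β - κ)))) i) ∂μ) ∧
     (1/2) * ∫ y, (∑ j, (((α₁ y)ᵀ *ᵥ (q⁻¹ *ᵥ (β - κ))) j)^2
        + ∑ j, (((α₂ y)ᵀ *ᵥ (q⁻¹ *ᵥ (β - κ))) j)^2) ∂μ
       = (1/2) * ((β - κ) ⬝ᵥ (q⁻¹ *ᵥ (β - κ)))) := by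
  set A : (Fin d → ℝ) → Matrix (Fin n) (Fin m ⊕ Fin m) ℝ := fun y => fromCols (α₁ y) (α₂ y)
  set w := q⁻¹ *ᵥ (β - κ)
  have hA : ∀ i k, Measurable fun y => A y i k := by
    rintro i (k | k)
    exacts [hα₁ i k, hα₂ i k]
  have hgram : ∀ i j, q i j = ∫ y, A y i ⬝ᵥ A y j ∂μ := fun i j => by
    simp only [hq', A, dotProduct, Fintype.sum_sum_type, fromCols_apply_inl, fromCols_apply_inr]
  have hint := integrable_row_dotProduct_row hA hq hgram
  have hdet : IsUnit q.det := isUnit_iff_ne_zero.2 hq.det_pos.ne'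
  have hqw : q *ᵥ w = β - κ := by rw [mulVec_mulVec, mul_nonsing_inv _ hdet, one_mulVec]
  have hAw : ∀ y, (A y)ᵀ *ᵥ w = Sum.elim ((α₁ y)ᵀ *ᵥ w) ((α₂ y)ᵀ *ᵥ w) := fun y => by
    simp only [A, transpose_fromCols, fromRows_mulVec]
  refine ⟨fun v₁ v₂ hv₁ hv₂ hvv hcon => ?_, fun j => measurable_pi_iff.1
    (measurable_transpose_mulVec hα₁ w) j, fun j => measurable_pi_iff.1
    (measurable_transpose_mulVec hα₂ w) j, ?_, fun i => ?_, ?_⟩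
  · have hb : ∀ i, ∫ y, (A y *ᵥ Sum.elim (v₁ y) (v₂ y)) i ∂μ = (β - κ) i := fun i => by
      simp only [A, fromCols_mulVec_sumElim, Pi.add_apply, Pi.sub_apply, hcon i]
      ring
    have := dotProduct_nonsing_inv_mulVec_le_integral_dotProduct_self hA hint hgram hdet
      (hv₁.sumElim_pi hv₂) (by simpa only [sumElim_dotProduct_self] using hvv) hb
    simp only [sumElim_dotProduct_self] at this
    linarith
  · simpa only [hAw, sumElim_dotProduct_self] using
      integrable_transpose_mulVec_dotProduct_self hint w
  · have := integral_mulVec_transpose_mulVec_apply hint hgram w i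
    simp only [hAw, A, fromCols_mulVec_sumElim, Pi.add_apply, hqw, Pi.sub_apply] at this
    rw [this]
    ring
  · have := integral_transpose_mulVec_dotProduct_self hint hgram w
    simp only [hAw, sumElim_dotProduct_self, hqw, dotProduct_comm w] at this
    rw [this]

theorem stmt1 {n m d : ℕ}
    (q : Matrix (Fin n) (Fin n) ℝ) (hq : q.PosDef)
    (κ β : Fin n → ℝ)
    (μ : Measure (Fin d → ℝ)) (hμ : IsProbabilityMeasure μ)
    (α₁ α₂ : (Fin d → ℝ) → Matrix (Fin n) (Fin m) ℝ)
    (hα₁ : ∀ i k, Measurable (fun y => α₁ y i k)) (hα₂ : ∀ i k, Measurable (fun y => α₂ y i k))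
    (hq' : ∀ i j, q i j =
      ∫ y, (∑ k, α₁ y i k * α₁ y j k + ∑ k, α₂ y i k * α₂ y j k) ∂μ) :
    (∀ v₁ v₂ : (Fin d → ℝ) → (Fin m → ℝ), Measurable v₁ → Measurable v₂ →
      Integrable (fun y => ∑ j, (v₁ y j)^2 + ∑ j, (v₂ y j)^2) μ →
      (∀ i, β i = κ i + ∫ y, ((α₁ y *ᵥ v₁ y) i + (α₂ y *ᵥ v₂ y) i) ∂μ) →
      (1/2) * ((β - κ) ⬝ᵥ (q⁻¹ *ᵥ (β - κ)))
        ≤ (1/2) * ∫ y, (∑ j, (v₁ y j)^2 + ∑ j, (v₂ y j)^2) ∂μ) ∧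
    ((∀ j, Measurable (fun y => ((α₁ y)ᵀ *ᵥ (q⁻¹ *ᵥ (β - κ))) j)) ∧
     (∀ j, Measurable (fun y => ((α₂ y)ᵀ *ᵥ (q⁻¹ *ᵥ (β - κ))) j)) ∧
     Integrable (fun y => ∑ j, (((α₁ y)ᵀ *ᵥ (q⁻¹ *ᵥ (β - κ))) j)^2
        + ∑ j, (((α₂ y)ᵀ *ᵥ (q⁻¹ *ᵥ (β - κ))) j)^2) μ ∧
     (∀ i, β i = κ i + ∫ y, ((α₁ y *ᵥ ((α₁ y)ᵀ *ᵥ (q⁻¹ *ᵥ (β - κ)))) i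
        + (α₂ y *ᵥ ((α₂ y)ᵀ *ᵥ (q⁻¹ *ᵥ (β - κ)))) i) ∂μ) ∧
     (1/2) * ∫ y, (∑ j, (((α₁ y)ᵀ *ᵥ (q⁻¹ *ᵥ (β - κ))) j)^2
        + ∑ j, (((α₂ y)ᵀ *ᵥ (q⁻¹ *ᵥ (β - κ))) j)^2) ∂μ
       = (1/2) * ((β - κ) ⬝ᵥ (q⁻¹ *ᵥ (β - κ)))) :=
  stmt1_general q hq κ β μ α₁ α₂ hα₁ hα₂ hq'
end

section
/- Fix x, η ∈ ℝⁿ and β ∈ ℝⁿ. Let θ(x,η,y,z₁,z₂) be affine in (z₁,z₂). Then the relaxed-control infimum L^{rel}(x,η,β) = inf over probability measures P on Z×Z×Y with ∫ L_x F dP = 0 for all F ∈ C²(Y), finite second moments, and β = ∫ θ dP, of (1/2)∫(|z₁|²+|z₂|²) dP, is greater than or equal to the ordinary-control infimum L^o(x,η,β) obtained by restricting to P of the form δ_{(v₁(y),v₂(y))}(dz₁ dz₂) μ(dy); conversely L^o ≥ L^{rel}, so L^{rel} = L^o. The inequality L^{rel} ≥ L^o follows by replacing ν(dz₁dz₂|y)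 with its mean v(y) = ∫ (z₁,z₂) ν(dz|y), using Jensen's inequality and affinity of θ in (z₁,z₂). -/
open MeasureTheory ProbabilityTheory Matrix

/-! Disintegrate a relaxed control along the state, `P = μ ⊗ ν(· | y)`, and replace `ν(· | y)` by
the Dirac mass at its mean `v y`. The state marginal `μ`, hence the generator constraint, is
unchanged; `∫ θ dP` is unchanged because `θ` is affine in the control; and the quadratic cost can
only decrease, by Jensen's inequality `(∫ z)² ≤ ∫ z²` in each coordinate. Conversely an ordinary
control `(μ, v)` is the relaxed control `μ.map (y ↦ (v y, y))`, so each infimum dominates the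
other. -/

section SumOfSquares

variable {α ι : Type*} [MeasurableSpace α] [Fintype ι] {μ : Measure α} {f : ι → α → ℝ}

lemma memLp_two_of_integrable_sum_sq (hf : ∀ i, AEStronglyMeasurable (f i) μ)
    (h : Integrable (fun x => ∑ i, f i x ^ 2) μ) (i : ι) : MemLp (f i) 2 μ := by
  refine (memLp_two_iff_integrable_sq (hf i)).2 <| h.mono' ((hf i).pow 2) ?_
  filter_upwards with x
  rw [Real.norm_of_nonneg (sq_nonneg _)]
  exact Finset.single_le_sum (fun j _ => sq_nonneg (f j x)) (Finset.mem_univ i)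

lemma sum_sq_integral_le_integral_sum_sq [IsProbabilityMeasure μ]
    (hf : ∀ i, AEStronglyMeasurable (f i) μ) (h : Integrable (fun x => ∑ i, f i x ^ 2) μ) :
    ∑ i, (∫ x, f i x ∂μ) ^ 2 ≤ ∫ x, ∑ i, f i x ^ 2 ∂μ := by
  have hf2 := memLp_two_of_integrable_sum_sq hf h
  rw [integral_finsetSum _ fun i _ => (hf2 i).integrable_sq]
  gcongr with i
  have := variance_nonneg (f i) μ
  rw [variance_eq_sub (hf2 i)] at this
  simpa [sub_nonneg] using this

end SumOfSquares

section Controls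

variable {ι : Type*} [Fintype ι]

def controlCost (z : (ι → ℝ) × (ι → ℝ)) : ℝ := ∑ j, z.1 j ^ 2 + ∑ j, z.2 j ^ 2

lemma controlCost_eq_sum_sumElim (z : (ι → ℝ) × (ι → ℝ)) :
    controlCost z = ∑ k, Sum.elim z.1 z.2 k ^ 2 := by
  simp [controlCost, Fintype.sum_sum_type]

lemma measurable_controlCost : Measurable (controlCost (ι := ι)) := by
  unfold controlCost; fun_prop

variable {ν : Measure ((ι → ℝ) × (ι → ℝ))}

lemma memLp_sumElim_of_integrable_controlCost (h : Integrable controlCost ν) (k : ι ⊕ ι) :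
    MemLp (fun z => Sum.elim z.1 z.2 k) 2 ν := by
  refine memLp_two_of_integrable_sum_sq
    (f := fun k (z : (ι → ℝ) × (ι → ℝ)) => Sum.elim z.1 z.2 k) (fun k => ?_) ?_ k
  · cases k <;> simp only [Sum.elim_inl, Sum.elim_inr] <;> fun_prop
  · exact h.congr (ae_of_all _ controlCost_eq_sum_sumElim)

lemma integrable_id_of_integrable_controlCost [IsFiniteMeasure ν] (h : Integrable controlCost ν) :
    Integrable id ν :=
  have hk k := (memLp_sumElim_of_integrable_controlCost h k).integrable one_le_two
  (Integrable.of_eval fun j => hk (.inl j)).prodMk (Integrable.of_eval fun j => hk (.inr j))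

lemma fst_integral_id_apply (h : Integrable id ν) (j : ι) : (∫ z, z ∂ν).1 j = ∫ z, z.1 j ∂ν := by
  rw [fst_integral (f := fun z => z) h]
  exact eval_integral (fun j => h.fst.eval j) j

lemma snd_integral_id_apply (h : Integrable id ν) (j : ι) : (∫ z, z ∂ν).2 j = ∫ z, z.2 j ∂ν := by
  rw [snd_integral (f := fun z => z) h]
  exact eval_integral (fun j => h.snd.eval j) j

lemma controlCost_integral_le [IsProbabilityMeasure ν] (h : Integrable controlCost ν) :
    controlCost (∫ z, z ∂ν) ≤ ∫ z, controlCost z ∂ν := by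
  have hid := integrable_id_of_integrable_controlCost h
  have key := sum_sq_integral_le_integral_sum_sq
    (f := fun k (z : (ι → ℝ) × (ι → ℝ)) => Sum.elim z.1 z.2 k)
    (fun k => (memLp_sumElim_of_integrable_controlCost h k).1)
    (h.congr (ae_of_all _ controlCost_eq_sum_sumElim))
  simpa [controlCost, Fintype.sum_sum_type, fst_integral_id_apply hid, snd_integral_id_apply hid]
    using key

lemma integral_affine_apply {κ : Type*} [IsProbabilityMeasure ν] (h : Integrable id ν)
    (a : κ → ℝ) (A B : Matrix κ ι ℝ) (i : κ) :
    ∫ z, (a + A *ᵥ z.1 + B *ᵥ z.2) i ∂ν = (a + A *ᵥ (∫ z, z ∂ν).1 + B *ᵥ (∫ z, z ∂ν).2) i := by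
  have h₁ j : Integrable (fun z => z.1 j) ν := h.fst.eval j
  have h₂ j : Integrable (fun z => z.2 j) ν := h.snd.eval j
  simp only [Pi.add_apply, mulVec, dotProduct, fst_integral_id_apply h, snd_integral_id_apply h]
  have hA : Integrable (fun z => ∑ j, A i j * z.1 j) ν :=
    integrable_finsetSum _ fun j _ => (h₁ j).const_mul _
  have hB : Integrable (fun z => ∑ j, B i j * z.2 j) ν :=
    integrable_finsetSum _ fun j _ => (h₂ j).const_mul _
  have haA : Integrable (fun z => a i + ∑ j, A i j * z.1 j) ν := (integrable_const _).add hA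
  rw [integral_add haA hB, integral_add (integrable_const _) hA,
    integral_finsetSum _ fun j _ => (h₁ j).const_mul _,
    integral_finsetSum _ fun j _ => (h₂ j).const_mul _]
  simp [integral_const_mul]

end Controls

section Disintegration

variable {Y Ω : Type*} [MeasurableSpace Y] [MeasurableSpace Ω] [StandardBorelSpace Ω] [Nonempty Ω]
  {ρ : Measure (Y × Ω)} [IsFiniteMeasure ρ]

lemma integrable_and_integral_eq_of_integral_condKernel_ae_eq {f : Y × Ω → ℝ} {g : Y → ℝ}
    (hf : Integrable f ρ) (hg : (fun y => ∫ z, f (y, z) ∂ρ.condKernel y) =ᵐ[ρ.fst] g) :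
    Integrable g ρ.fst ∧ ∫ y, g y ∂ρ.fst = ∫ p, f p ∂ρ :=
  ⟨hf.integral_condKernel.congr hg, by rw [← integral_congr_ae hg, Measure.integral_condKernel hf]⟩

lemma integrable_and_integral_eq_of_integrable_comp_fst {g : Y → ℝ}
    (hg : Integrable (fun p => g p.1) ρ) :
    Integrable g ρ.fst ∧ ∫ y, g y ∂ρ.fst = ∫ p, g p.1 ∂ρ :=
  integrable_and_integral_eq_of_integral_condKernel_ae_eq hg (ae_of_all _ fun y => by simp)

end Disintegration

section ConditionalMean

variable {Y ι : Type*} [MeasurableSpace Y] [Fintype ι]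
  {ρ : Measure (Y × ((ι → ℝ) × (ι → ℝ)))} [IsProbabilityMeasure ρ]

lemma measurable_integral_condKernel_id : Measurable fun y => ∫ z, z ∂ρ.condKernel y :=
  (measurable_snd.stronglyMeasurable.integral_kernel_prod_right' (κ := ρ.condKernel)).measurable

lemma integrable_controlCost_integral_condKernel
    (hcost : Integrable (fun p => controlCost p.2) ρ) :
    Integrable (fun y => controlCost (∫ z, z ∂ρ.condKernel y)) ρ.fst := by
  refine hcost.integral_condKernel.mono'
    (measurable_controlCost.comp measurable_integral_condKernel_id).aestronglyMeasurable ?_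
  filter_upwards [hcost.condKernel_ae] with y hy
  rw [Real.norm_of_nonneg (by unfold controlCost; positivity)]
  exact controlCost_integral_le hy

lemma integral_controlCost_integral_condKernel_le
    (hcost : Integrable (fun p => controlCost p.2) ρ) :
    ∫ y, controlCost (∫ z, z ∂ρ.condKernel y) ∂ρ.fst ≤ ∫ p, controlCost p.2 ∂ρ := by
  rw [← Measure.integral_condKernel hcost]
  refine integral_mono_ae (integrable_controlCost_integral_condKernel hcost)
    hcost.integral_condKernel ?_
  filter_upwards [hcost.condKernel_ae] with y hy
  exact controlCost_integral_le hy

lemma integral_condKernel_affine_ae_eq {κ : Type*} (θ : Y → (ι → ℝ) → (ι → ℝ) → κ → ℝ)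
    (θ₀ : Y → κ → ℝ) (θ₁ θ₂ : Y → Matrix κ ι ℝ)
    (hθ : ∀ y z₁ z₂, θ y z₁ z₂ = θ₀ y + θ₁ y *ᵥ z₁ + θ₂ y *ᵥ z₂)
    (hcost : Integrable (fun p => controlCost p.2) ρ) (i : κ) :
    (fun y => ∫ z, θ y z.1 z.2 i ∂ρ.condKernel y) =ᵐ[ρ.fst]
      fun y => θ y (∫ z, z ∂ρ.condKernel y).1 (∫ z, z ∂ρ.condKernel y).2 i := by
  filter_upwards [hcost.condKernel_ae] with y hy
  simp only [hθ]
  exact integral_affine_apply (integrable_id_of_integrable_controlCost hy) _ _ _ i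

end ConditionalMean

section ControlProblems

variable {Y ι κ : Type*} [MeasurableSpace Y] [Fintype ι]

/-- `relaxedCosts` and `ordinaryCosts` are the sets whose infima are `L^rel(β)` and `L^o(β)`,
with `L` the generator `L_x` and `𝒞` its test functions; a relaxed control is the law of
`(z₁, z₂, y)`. -/
def relaxedCosts (L : (Y → ℝ) → (Y → ℝ)) (𝒞 : Set (Y → ℝ))
    (θ : Y → (ι → ℝ) → (ι → ℝ) → κ → ℝ) (β : κ → ℝ) : Set ℝ :=
  {c | ∃ P : Measure ((ι → ℝ) × (ι → ℝ) × Y),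
    IsProbabilityMeasure P ∧
    Integrable (fun w => controlCost (w.1, w.2.1)) P ∧
    (∀ F ∈ 𝒞, Integrable (fun w => L F w.2.2) P ∧ ∫ w, L F w.2.2 ∂P = 0) ∧
    (∀ i, Integrable (fun w => θ w.2.2 w.1 w.2.1 i) P) ∧
    (∀ i, β i = ∫ w, θ w.2.2 w.1 w.2.1 i ∂P) ∧
    c = (1/2) * ∫ w, controlCost (w.1, w.2.1) ∂P}

def ordinaryCosts (L : (Y → ℝ) → (Y → ℝ)) (𝒞 : Set (Y → ℝ))
    (θ : Y → (ι → ℝ) → (ι → ℝ) → κ → ℝ) (β : κ → ℝ) : Set ℝ :=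
  {c | ∃ (μ : Measure Y) (v₁ v₂ : Y → ι → ℝ),
    IsProbabilityMeasure μ ∧ Measurable v₁ ∧ Measurable v₂ ∧
    Integrable (fun y => controlCost (v₁ y, v₂ y)) μ ∧
    (∀ F ∈ 𝒞, Integrable (fun y => L F y) μ ∧ ∫ y, L F y ∂μ = 0) ∧
    (∀ i, Integrable (fun y => θ y (v₁ y) (v₂ y) i) μ) ∧
    (∀ i, β i = ∫ y, θ y (v₁ y) (v₂ y) i ∂μ) ∧
    c = (1/2) * ∫ y, controlCost (v₁ y, v₂ y) ∂μ}

variable {L : (Y → ℝ) → (Y → ℝ)} {𝒞 : Set (Y → ℝ)} {θ : Y → (ι → ℝ) → (ι → ℝ) → κ → ℝ} {β : κ → ℝ}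

lemma ordinaryCosts_subset_relaxedCosts [StandardBorelSpace Y] :
    ordinaryCosts L 𝒞 θ β ⊆ relaxedCosts L 𝒞 θ β := by
  rintro c ⟨μ, v₁, v₂, hμ, hv₁, hv₂, hcost, hL, hθ, hβ, rfl⟩
  have hemb : MeasurableEmbedding fun y => (v₁ y, v₂ y, y) :=
    (hv₁.prodMk (hv₂.prodMk measurable_id)).measurableEmbedding
      fun y y' h => congrArg (fun w => w.2.2) h
  refine ⟨μ.map fun y => (v₁ y, v₂ y, y),
    Measure.isProbabilityMeasure_map hemb.measurable.aemeasurable,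
    hemb.integrable_map_iff.2 hcost, fun F hF => ?_, fun i => hemb.integrable_map_iff.2 (hθ i),
    fun i => by rw [hemb.integral_map]; exact hβ i, by rw [hemb.integral_map]⟩
  exact ⟨hemb.integrable_map_iff.2 (hL F hF).1, by rw [hemb.integral_map]; exact (hL F hF).2⟩

lemma exists_mem_ordinaryCosts_le_of_disintegration {ρ : Measure (Y × ((ι → ℝ) × (ι → ℝ)))}
    [IsProbabilityMeasure ρ] (θ₀ : Y → κ → ℝ) (θ₁ θ₂ : Y → Matrix κ ι ℝ)
    (hθ : ∀ y z₁ z₂, θ y z₁ z₂ = θ₀ y + θ₁ y *ᵥ z₁ + θ₂ y *ᵥ z₂)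
    (hcost : Integrable (fun p => controlCost p.2) ρ)
    (hL : ∀ F ∈ 𝒞, Integrable (fun p => L F p.1) ρ ∧ ∫ p, L F p.1 ∂ρ = 0)
    (hθint : ∀ i, Integrable (fun p => θ p.1 p.2.1 p.2.2 i) ρ)
    (hβ : ∀ i, β i = ∫ p, θ p.1 p.2.1 p.2.2 i ∂ρ) :
    ∃ c ∈ ordinaryCosts L 𝒞 θ β, c ≤ (1/2) * ∫ p, controlCost p.2 ∂ρ := by
  set v : Y → (ι → ℝ) × (ι → ℝ) := fun y => ∫ z, z ∂ρ.condKernel y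
  have hmean i := integrable_and_integral_eq_of_integral_condKernel_ae_eq (hθint i)
    (integral_condKernel_affine_ae_eq θ θ₀ θ₁ θ₂ hθ hcost i)
  refine ⟨_, ⟨ρ.fst, fun y => (v y).1, fun y => (v y).2, inferInstance,
    measurable_integral_condKernel_id.fst, measurable_integral_condKernel_id.snd,
    integrable_controlCost_integral_condKernel hcost, fun F hF => ?_, fun i => (hmean i).1,
    fun i => (hβ i).trans (hmean i).2.symm, rfl⟩, ?_⟩
  · obtain ⟨hint, hzero⟩ := integrable_and_integral_eq_of_integrable_comp_fst (hL F hF).1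
    exact ⟨hint, hzero.trans (hL F hF).2⟩
  · gcongr
    exact integral_controlCost_integral_condKernel_le hcost

lemma exists_mem_ordinaryCosts_le (θ₀ : Y → κ → ℝ) (θ₁ θ₂ : Y → Matrix κ ι ℝ)
    (hθ : ∀ y z₁ z₂, θ y z₁ z₂ = θ₀ y + θ₁ y *ᵥ z₁ + θ₂ y *ᵥ z₂)
    {c : ℝ} (hc : c ∈ relaxedCosts L 𝒞 θ β) : ∃ c' ∈ ordinaryCosts L 𝒞 θ β, c' ≤ c := by
  obtain ⟨P, hP, hcost, hL, hθint, hβ, rfl⟩ := hc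
  -- `Measure.condKernel` disintegrates along the first factor, so the state is moved there.
  let e : (ι → ℝ) × (ι → ℝ) × Y ≃ᵐ Y × (ι → ℝ) × (ι → ℝ) :=
    MeasurableEquiv.prodAssoc.symm.trans MeasurableEquiv.prodComm
  have := Measure.isProbabilityMeasure_map (μ := P) e.measurable.aemeasurable
  have hint {g : Y × (ι → ℝ) × (ι → ℝ) → ℝ} (hg : Integrable (g ∘ e) P) :
      Integrable g (P.map e) := (integrable_map_equiv e g).2 hg
  have hintegral (g : Y × (ι → ℝ) × (ι → ℝ) → ℝ) : ∫ p, g p ∂P.map e = ∫ w, g (e w) ∂P :=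
    integral_map_equiv e g
  obtain ⟨c', hc', hle⟩ := exists_mem_ordinaryCosts_le_of_disintegration θ₀ θ₁ θ₂ hθ (hint hcost)
    (fun F hF => ⟨hint (hL F hF).1, (hintegral _).trans (hL F hF).2⟩) (fun i => hint (hθint i))
    (fun i => (hβ i).trans (hintegral fun p => θ p.1 p.2.1 p.2.2 i).symm)
  exact ⟨c', hc', hle.trans_eq (by rw [hintegral]; rfl)⟩

end ControlProblems

theorem stmt13 {n m d : ℕ}
    (L : ((Fin d → ℝ) → ℝ) → ((Fin d → ℝ) → ℝ))
    (𝒞 : Set ((Fin d → ℝ) → ℝ))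
    (θ : (Fin d → ℝ) → (Fin m → ℝ) → (Fin m → ℝ) → (Fin n → ℝ))
    (haff : ∃ (θ₀ : (Fin d → ℝ) → Fin n → ℝ)
        (θ₁ θ₂ : (Fin d → ℝ) → Matrix (Fin n) (Fin m) ℝ),
      ∀ y z₁ z₂, θ y z₁ z₂ = θ₀ y + θ₁ y *ᵥ z₁ + θ₂ y *ᵥ z₂)
    (β : Fin n → ℝ) :
    sInf {c : ℝ | ∃ P : Measure ((Fin m → ℝ) × (Fin m → ℝ) × (Fin d → ℝ)),
        IsProbabilityMeasure P ∧
        Integrable (fun w => ∑ j, (w.1 j)^2 + ∑ j, (w.2.1 j)^2) P ∧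
        (∀ F ∈ 𝒞, Integrable (fun w => L F w.2.2) P ∧ ∫ w, L F w.2.2 ∂P = 0) ∧
        (∀ i, Integrable (fun w => θ w.2.2 w.1 w.2.1 i) P) ∧
        (∀ i, β i = ∫ w, θ w.2.2 w.1 w.2.1 i ∂P) ∧
        c = (1/2) * ∫ w, (∑ j, (w.1 j)^2 + ∑ j, (w.2.1 j)^2) ∂P}
    = sInf {c : ℝ | ∃ (μ : Measure (Fin d → ℝ))
          (v₁ v₂ : (Fin d → ℝ) → (Fin m → ℝ)),
        IsProbabilityMeasure μ ∧ Measurable v₁ ∧ Measurable v₂ ∧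
        Integrable (fun y => ∑ j, (v₁ y j)^2 + ∑ j, (v₂ y j)^2) μ ∧
        (∀ F ∈ 𝒞, Integrable (fun y => L F y) μ ∧ ∫ y, L F y ∂μ = 0) ∧
        (∀ i, Integrable (fun y => θ y (v₁ y) (v₂ y) i) μ) ∧
        (∀ i, β i = ∫ y, θ y (v₁ y) (v₂ y) i ∂μ) ∧
        c = (1/2) * ∫ y, (∑ j, (v₁ y j)^2 + ∑ j, (v₂ y j)^2) ∂μ} := by
  obtain ⟨θ₀, θ₁, θ₂, hθ⟩ := haff
  show sInf (relaxedCosts L 𝒞 θ β) = sInf (ordinaryCosts L 𝒞 θ β)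
  exact csInf_eq_csInf_of_forall_exists_le
    (fun c hc => exists_mem_ordinaryCosts_le θ₀ θ₁ θ₂ hθ hc)
    fun c hc => ⟨c, ordinaryCosts_subset_relaxedCosts hc, le_rfl⟩
end
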